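/- arXiv:1809.02886 — 2 statements merged into one kernel-verified Lean document; each statement's English description precedes it below -/
import Mathlib

section
/- (Uniqueness of steady states.) For every choice of positive rate constants k ∈ ℝ¹⁰ and every c ∈ ℝ³ with all entries positive, there exists exactly one point x in the compatibility class P(c) with g_k(x) = 0, and this unique steady state has all nine coordinates strictly positive. -/
/-!
For fixed `x 0`, `x 1`, `x 5`, the steady-state equations are linear in the other coordinates and
determine them; this is `chi`. The conservation laws then reduce to one equation in
`t = x 0 * x 1`: the bound kinase and bound phosphatase are `a t` and `e t`, so
`x 1 = c 0 - a t`, `x 5 = c 1 - e t`, and the substrate total gives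
`totalSubstrate a e d (c 0) (c 1) t = c 2`.
On `[0, min (c 0 / a) (c 1 / e))` this function is continuous and strictly increasing, vanishes
at `0` and tends to infinity at the right end, so it takes the value `c 2` exactly once. This
gives exactly one steady state, and it is positive because `chi` is positive at positive
arguments.
-/

open Matrix Polynomial

noncomputable section

/-- The mass-action vector field of the mixed-mechanism dual-site phosphorylation
network.  Indexing: `k i` is the rate constant `k_{i+1}`, and `x i` is the
concentration `x_{i+1}`. -/
def g (k : Fin 10 → ℝ) (x : Fin 9 → ℝ) : Fin 9 → ℝ :=
  ![-k 0 * x 0 * x 1 + k 1 * x 2 + k 9 * x 8,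
    -k 0 * x 0 * x 1 + k 1 * x 2 + k 3 * x 3,
    k 0 * x 0 * x 1 - (k 1 + k 2) * x 2,
    k 2 * x 2 - k 3 * x 3,
    k 3 * x 3 - k 4 * x 4 * x 5 + k 5 * x 6,
    -k 4 * x 4 * x 5 - k 7 * x 5 * x 7 + (k 5 + k 6) * x 6 + (k 8 + k 9) * x 8,
    k 4 * x 4 * x 5 - (k 5 + k 6) * x 6,
    k 6 * x 6 - k 7 * x 5 * x 7 + k 8 * x 8,
    k 7 * x 5 * x 7 - (k 8 + k 9) * x 8]

/-- The conservation map `φ(x) = (K_tot, P_tot, S_tot)`. -/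
def phi (x : Fin 9 → ℝ) : Fin 3 → ℝ :=
  ![x 1 + x 2 + x 3,
    x 5 + x 6 + x 8,
    x 0 + x 2 + x 3 + x 4 + x 6 + x 7 + x 8]

/-- The steady-state parametrization `χ_k(x₁, x₂, x₆)`; the input is
`y = (x₁, x₂, x₆)`. -/
def chi (k : Fin 10 → ℝ) (y : Fin 3 → ℝ) : Fin 9 → ℝ :=
  ![y 0, y 1,
    k 0 * y 0 * y 1 / (k 1 + k 2),
    k 0 * k 2 * y 0 * y 1 / ((k 1 + k 2) * k 3),
    k 0 * k 2 * (k 5 + k 6) * y 0 * y 1 / ((k 1 + k 2) * k 4 * k 6 * y 2),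
    y 2,
    k 0 * k 2 * y 0 * y 1 / ((k 1 + k 2) * k 6),
    k 0 * k 2 * (k 8 + k 9) * y 0 * y 1 / ((k 1 + k 2) * k 7 * k 9 * y 2),
    k 0 * k 2 * y 0 * y 1 / ((k 1 + k 2) * k 9)]

/-- The 9×9 Jacobian matrix of `g k` at `x`: the matrix of partial
derivatives `∂gᵢ/∂xⱼ`. -/
def Jmat (k : Fin 10 → ℝ) (x : Fin 9 → ℝ) : Matrix (Fin 9) (Fin 9) ℝ :=
  Matrix.of fun i j => fderiv ℝ (fun y => g k y i) x (Pi.single j 1)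

/-- Hurwitz-matrix entries from the coefficients `b₁, …, b₆` (given as
`b 1, …, b 6`), with the conventions `b₀ = 1` and `b_m = 0` for `m < 0` or
`m > 6`. -/
def hcoef (b : ℕ → ℝ) : ℤ → ℝ := fun m =>
  if m = 0 then 1 else if 1 ≤ m ∧ m ≤ 6 then b m.toNat else 0

/-- The `i`-th Hurwitz determinant: the determinant of the `i × i` matrix whose
(1-indexed) `(j, l)` entry is `b_{2j − l}`. -/
def hurwitzDet (b : ℕ → ℝ) (i : ℕ) : ℝ :=
  (Matrix.of fun j l : Fin i => hcoef b (2 * ((j : ℤ) + 1) - ((l : ℤ) + 1))).det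

/-- The coefficients `b₁, …, b₆` of the degree-6 factor of the characteristic
polynomial of the Jacobian at the parametrized steady state `χ_k(y)`:
since `charpoly = λ³(λ⁶ + b₁λ⁵ + ⋯ + b₆)`, the coefficient `bᵢ` is the
coefficient of `λ^(9−i)` in the characteristic polynomial. -/
def bcoef (k : Fin 10 → ℝ) (y : Fin 3 → ℝ) : ℕ → ℝ := fun i =>
  ((Jmat k (chi k y)).charpoly).coeff (9 - i)

open Filter Set Topology

theorem tendsto_mul_div_sub_mul_nhdsLT {a b c : ℝ} (ha : 0 < a) (hb : 0 < b) (hc : 0 < c) :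
    Tendsto (fun t => b * t / (c - a * t)) (𝓝[<] (c / a)) atTop := by
  have hden : Tendsto (fun t => c - a * t) (𝓝[<] (c / a)) (𝓝[>] 0) := by
    refine tendsto_nhdsWithin_of_tendsto_nhds_of_eventually_within _ ?_ ?_
    · exact ((by fun_prop : Continuous fun t => c - a * t).tendsto' _ _
        (by rw [mul_div_cancel₀ c ha.ne', sub_self])).mono_left nhdsWithin_le_nhds
    · filter_upwards [self_mem_nhdsWithin] with t (ht : t < c / a)
      rw [lt_div_iff₀ ha] at ht
      simpa [mul_comm] using ht
  have hnum : Tendsto (fun t => b * t) (𝓝[<] (c / a)) (𝓝 (b * (c / a))) :=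
    (Continuous.tendsto (by fun_prop) _).mono_left nhdsWithin_le_nhds
  exact (hnum.pos_mul_atTop (by positivity) (tendsto_inv_nhdsGT_zero.comp hden)).congr
    fun t => (div_eq_mul_inv _ _).symm

def totalSubstrate (a e d c₀ c₁ t : ℝ) : ℝ :=
  t / (c₀ - a * t) + (a + e) * t + d * t / (c₁ - e * t)

section totalSubstrate

variable {a e d c₀ c₁ : ℝ}

theorem strictMonoOn_totalSubstrate (ha : 0 ≤ a) (he : 0 ≤ e) (hd : 0 ≤ d) :
    StrictMonoOn (totalSubstrate a e d c₀ c₁) {t | 0 ≤ t ∧ a * t < c₀ ∧ e * t < c₁} := by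
  rintro s ⟨hs, hsa, hse⟩ t ⟨ht, hta, hte⟩ hst
  have hc₀ : 0 < c₀ := (mul_nonneg ha ht).trans_lt hta
  have hc₁ : 0 < c₁ := (mul_nonneg he ht).trans_lt hte
  have h₁ : s / (c₀ - a * s) < t / (c₀ - a * t) := by
    rw [div_lt_div_iff₀ (by linarith) (by linarith)]
    nlinarith
  have h₂ : (a + e) * s ≤ (a + e) * t := by gcongr
  have h₃ : d * s / (c₁ - e * s) ≤ d * t / (c₁ - e * t) := by
    rw [div_le_div_iff₀ (by nlinarith) (by linarith)]
    nlinarith [mul_nonneg hd hc₁.le]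
  unfold totalSubstrate
  linarith

theorem continuousOn_totalSubstrate :
    ContinuousOn (totalSubstrate a e d c₀ c₁) {t | a * t < c₀ ∧ e * t < c₁} := by
  unfold totalSubstrate
  refine ((continuousOn_id.div (by fun_prop) ?_).add (by fun_prop)).add
    ((by fun_prop : Continuous fun t => d * t).continuousOn.div (by fun_prop) ?_)
  all_goals rintro t ⟨hta, hte⟩; linarith

theorem tendsto_totalSubstrate_nhdsLT (ha : 0 < a) (he : 0 < e) (hd : 0 < d) (hc₀ : 0 < c₀)
    (hc₁ : 0 < c₁) :
    Tendsto (totalSubstrate a e d c₀ c₁) (𝓝[<] min (c₀ / a) (c₁ / e)) atTop := by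
  have hpos : ∀ᶠ t in 𝓝[<] min (c₀ / a) (c₁ / e), 0 < t ∧ a * t < c₀ ∧ e * t < c₁ := by
    filter_upwards [Ioo_mem_nhdsLT (lt_min (div_pos hc₀ ha) (div_pos hc₁ he))]
      with t ⟨ht, hte⟩
    rw [lt_min_iff, lt_div_iff₀ ha, lt_div_iff₀ he] at hte
    exact ⟨ht, by linarith, by linarith⟩
  rcases le_total (c₀ / a) (c₁ / e) with h | h
  · rw [min_eq_left h] at hpos ⊢
    refine tendsto_atTop_mono' _ ?_ (by simpa using tendsto_mul_div_sub_mul_nhdsLT ha one_pos hc₀)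
    filter_upwards [hpos] with t ⟨ht, hta, hte⟩
    have : 0 ≤ (a + e) * t := by positivity
    have : 0 ≤ d * t / (c₁ - e * t) := div_nonneg (by positivity) (by linarith)
    simp only [totalSubstrate]
    linarith
  · rw [min_eq_right h] at hpos ⊢
    refine tendsto_atTop_mono' _ ?_ (tendsto_mul_div_sub_mul_nhdsLT he hd hc₁)
    filter_upwards [hpos] with t ⟨ht, hta, hte⟩
    have : 0 ≤ t / (c₀ - a * t) := div_nonneg ht.le (by linarith)
    have : 0 ≤ (a + e) * t := by positivity
    simp only [totalSubstrate]
    linarith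

theorem existsUnique_totalSubstrate_eq (ha : 0 < a) (he : 0 < e) (hd : 0 < d) (hc₀ : 0 < c₀)
    (hc₁ : 0 < c₁) {s : ℝ} (hs : 0 < s) :
    ∃! t, (0 < t ∧ a * t < c₀ ∧ e * t < c₁) ∧ totalSubstrate a e d c₀ c₁ t = s := by
  set T := min (c₀ / a) (c₁ / e)
  have hT : 0 < T := lt_min (div_pos hc₀ ha) (div_pos hc₁ he)
  have hIco : Ico 0 T = {t | 0 ≤ t ∧ a * t < c₀ ∧ e * t < c₁} := by
    ext t
    simp only [mem_Ico, mem_ofPred_eq, T, lt_min_iff, lt_div_iff₀ ha, lt_div_iff₀ he, mul_comm t]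
  have hzero : totalSubstrate a e d c₀ c₁ 0 = 0 := by simp [totalSubstrate]
  obtain ⟨t, ht, rfl⟩ : s ∈ totalSubstrate a e d c₀ c₁ '' Ico 0 T :=
    isPreconnected_Ico.intermediate_value_Ici (left_mem_Ico.2 hT)
      (le_principal_iff.2 (Ico_mem_nhdsLT hT))
      (hIco ▸ continuousOn_totalSubstrate.mono fun t ht => ht.2)
      (tendsto_totalSubstrate_nhdsLT ha he hd hc₀ hc₁) (by rw [mem_Ici, hzero]; exact hs.le)
  rw [hIco] at ht
  have ht₀ : 0 < t := ht.1.lt_of_ne (by rintro rfl; exact hs.ne' hzero)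
  refine ⟨t, ⟨⟨ht₀, ht.2⟩, rfl⟩, fun t' ⟨ht', hts'⟩ => ?_⟩
  exact (strictMonoOn_totalSubstrate ha.le he.le hd.le).injOn ⟨ht'.1.le, ht'.2⟩ ht hts'

end totalSubstrate

-- At a steady state with `t = x 0 * x 1`: `x 2 + x 3 = a t`, `x 6 + x 8 = e t` and
-- `x 5 * (x 4 + x 7) = d t` for these three coefficients `a`, `e`, `d`.
def boundKinaseCoeff (k : Fin 10 → ℝ) : ℝ :=
  k 0 / (k 1 + k 2) + k 0 * k 2 / ((k 1 + k 2) * k 3)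

def boundPhosphataseCoeff (k : Fin 10 → ℝ) : ℝ :=
  k 0 * k 2 / ((k 1 + k 2) * k 6) + k 0 * k 2 / ((k 1 + k 2) * k 9)

def phosphoformCoeff (k : Fin 10 → ℝ) : ℝ :=
  k 0 * k 2 * (k 5 + k 6) / ((k 1 + k 2) * k 4 * k 6) +
    k 0 * k 2 * (k 8 + k 9) / ((k 1 + k 2) * k 7 * k 9)

theorem phi_chi (k : Fin 10 → ℝ) (y : Fin 3 → ℝ) :
    phi (chi k y) =
      ![y 1 + boundKinaseCoeff k * (y 0 * y 1),
        y 2 + boundPhosphataseCoeff k * (y 0 * y 1),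
        y 0 + (boundKinaseCoeff k + boundPhosphataseCoeff k) * (y 0 * y 1) +
          phosphoformCoeff k * (y 0 * y 1) / y 2] := by
  funext i
  fin_cases i <;>
    simp only [phi, chi, boundKinaseCoeff, boundPhosphataseCoeff, phosphoformCoeff,
      div_eq_mul_inv, _root_.mul_inv_rev, cons_val_zero, cons_val_one, cons_val,
      Fin.zero_eta, Fin.mk_one, Fin.reduceFinMk] <;>
    ring

section chi

variable {k : Fin 10 → ℝ}

theorem boundKinaseCoeff_pos (hk : ∀ i, 0 < k i) : 0 < boundKinaseCoeff k := by
  have := hk 0; have := hk 1; have := hk 2; have := hk 3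
  unfold boundKinaseCoeff; positivity

theorem boundPhosphataseCoeff_pos (hk : ∀ i, 0 < k i) : 0 < boundPhosphataseCoeff k := by
  have := hk 0; have := hk 1; have := hk 2; have := hk 6; have := hk 9
  unfold boundPhosphataseCoeff; positivity

theorem phosphoformCoeff_pos (hk : ∀ i, 0 < k i) : 0 < phosphoformCoeff k := by
  have := hk 0; have := hk 1; have := hk 2; have := hk 4; have := hk 5; have := hk 6
  have := hk 7; have := hk 8; have := hk 9
  unfold phosphoformCoeff; positivity

theorem g_chi_eq_zero (hk : ∀ i, 0 < k i) {y : Fin 3 → ℝ} (hy : y 2 ≠ 0) :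
    g k (chi k y) = 0 := by
  have := hk 1; have := hk 2; have := hk 3; have := hk 4; have := hk 6; have := hk 7; have := hk 9
  funext i
  fin_cases i <;>
    simp only [g, chi, Pi.zero_apply, cons_val_zero, cons_val_one, cons_val,
      Fin.zero_eta, Fin.mk_one, Fin.reduceFinMk] <;>
    field_simp <;> ring

theorem chi_pos (hk : ∀ i, 0 < k i) {y : Fin 3 → ℝ} (hy : ∀ i, 0 < y i) (i : Fin 9) :
    0 < chi k y i := by
  have := hk 0; have := hk 1; have := hk 2; have := hk 3; have := hk 4; have := hk 5
  have := hk 6; have := hk 7; have := hk 8; have := hk 9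
  have := hy 0; have := hy 1; have := hy 2
  fin_cases i <;>
    simp only [chi, cons_val_zero, cons_val_one, cons_val,
      Fin.zero_eta, Fin.mk_one, Fin.reduceFinMk] <;>
    positivity

theorem chi_eq_of_g_eq_zero (hk : ∀ i, 0 < k i) {x : Fin 9 → ℝ} (hg : g k x = 0)
    (hx : x 5 ≠ 0) : chi k ![x 0, x 1, x 5] = x := by
  have := hk 1; have := hk 2; have := hk 3; have := hk 4; have := hk 6; have := hk 7; have := hk 9
  have e2 : k 0 * x 0 * x 1 - (k 1 + k 2) * x 2 = 0 := congrFun hg 2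
  have e3 : k 2 * x 2 - k 3 * x 3 = 0 := congrFun hg 3
  have e4 : k 3 * x 3 - k 4 * x 4 * x 5 + k 5 * x 6 = 0 := congrFun hg 4
  have e6 : k 4 * x 4 * x 5 - (k 5 + k 6) * x 6 = 0 := congrFun hg 6
  have e7 : k 6 * x 6 - k 7 * x 5 * x 7 + k 8 * x 8 = 0 := congrFun hg 7
  have e8 : k 7 * x 5 * x 7 - (k 8 + k 9) * x 8 = 0 := congrFun hg 8
  have h2 : (k 1 + k 2) * x 2 = k 0 * x 0 * x 1 := by linear_combination -e2
  have h3 : (k 1 + k 2) * k 3 * x 3 = k 0 * k 2 * x 0 * x 1 := by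
    linear_combination -k 2 * e2 - (k 1 + k 2) * e3
  have h6 : (k 1 + k 2) * k 6 * x 6 = k 0 * k 2 * x 0 * x 1 := by
    linear_combination h3 - (k 1 + k 2) * (e4 + e6)
  have h8 : (k 1 + k 2) * k 9 * x 8 = k 0 * k 2 * x 0 * x 1 := by
    linear_combination h6 - (k 1 + k 2) * (e7 + e8)
  have h4 : (k 1 + k 2) * k 4 * k 6 * x 4 * x 5 = k 0 * k 2 * (k 5 + k 6) * x 0 * x 1 := by
    linear_combination (k 1 + k 2) * k 6 * e6 + (k 5 + k 6) * h6
  have h7 : (k 1 + k 2) * k 7 * k 9 * x 5 * x 7 = k 0 * k 2 * (k 8 + k 9) * x 0 * x 1 := by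
    linear_combination (k 1 + k 2) * k 9 * e8 + (k 8 + k 9) * h8
  funext i
  fin_cases i <;>
    simp only [chi, cons_val_zero, cons_val_one, cons_val,
      Fin.zero_eta, Fin.mk_one, Fin.reduceFinMk] <;>
    field_simp <;> linarith

end chi

def IsSteadyStateIn (k : Fin 10 → ℝ) (c : Fin 3 → ℝ) (x : Fin 9 → ℝ) : Prop :=
  (∀ i, 0 ≤ x i) ∧ phi x = c ∧ g k x = 0

def steadyStateCurve (k : Fin 10 → ℝ) (c : Fin 3 → ℝ) (t : ℝ) : Fin 9 → ℝ :=
  chi k ![t / (c 0 - boundKinaseCoeff k * t), c 0 - boundKinaseCoeff k * t,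
    c 1 - boundPhosphataseCoeff k * t]

section steadyStateCurve

variable {k : Fin 10 → ℝ} {c : Fin 3 → ℝ} {t : ℝ}

theorem steadyStateCurve_pos (hk : ∀ i, 0 < k i)
    (ht : 0 < t ∧ boundKinaseCoeff k * t < c 0 ∧ boundPhosphataseCoeff k * t < c 1) (i : Fin 9) :
    0 < steadyStateCurve k c t i := by
  obtain ⟨ht, hta, hte⟩ := ht
  refine chi_pos hk (fun j => ?_) i
  fin_cases j <;> simp only [cons_val_zero, cons_val_one, cons_val, Fin.zero_eta, Fin.mk_one,
    Fin.reduceFinMk]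
  · exact div_pos ht (by linarith)
  · linarith
  · linarith

theorem isSteadyStateIn_steadyStateCurve (hk : ∀ i, 0 < k i)
    (ht : 0 < t ∧ boundKinaseCoeff k * t < c 0 ∧ boundPhosphataseCoeff k * t < c 1)
    (hH : totalSubstrate (boundKinaseCoeff k) (boundPhosphataseCoeff k) (phosphoformCoeff k)
      (c 0) (c 1) t = c 2) :
    IsSteadyStateIn k c (steadyStateCurve k c t) := by
  have hx1 : c 0 - boundKinaseCoeff k * t ≠ 0 := by linarith
  refine ⟨fun i => (steadyStateCurve_pos hk ht i).le, ?_,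
    g_chi_eq_zero hk (show c 1 - boundPhosphataseCoeff k * t ≠ 0 by linarith)⟩
  rw [steadyStateCurve, phi_chi]
  funext i
  fin_cases i <;> simp [div_mul_cancel₀ t hx1, ← hH, totalSubstrate]

theorem exists_steadyStateCurve_eq (hk : ∀ i, 0 < k i) (hc : ∀ i, 0 < c i) {x : Fin 9 → ℝ}
    (hx : IsSteadyStateIn k c x) :
    ∃ t, (0 < t ∧ boundKinaseCoeff k * t < c 0 ∧ boundPhosphataseCoeff k * t < c 1) ∧
      totalSubstrate (boundKinaseCoeff k) (boundPhosphataseCoeff k) (phosphoformCoeff k)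
        (c 0) (c 1) t = c 2 ∧
      steadyStateCurve k c t = x := by
  obtain ⟨hx, hphi, hg⟩ := hx
  have h5 : 0 < x 5 := by
    refine (hx 5).lt_of_ne fun h5 => (hc 1).ne' ?_
    have := hk 5; have := hk 6; have := hk 8; have := hk 9
    have e6 : k 4 * x 4 * x 5 - (k 5 + k 6) * x 6 = 0 := congrFun hg 6
    have e8 : k 7 * x 5 * x 7 - (k 8 + k 9) * x 8 = 0 := congrFun hg 8
    rw [← h5] at e6 e8
    have h6 : x 6 = 0 :=
      (mul_eq_zero.1 (by linarith : (k 5 + k 6) * x 6 = 0)).resolve_left (by positivity)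
    have h8 : x 8 = 0 :=
      (mul_eq_zero.1 (by linarith : (k 8 + k 9) * x 8 = 0)).resolve_left (by positivity)
    have hp1 : x 5 + x 6 + x 8 = c 1 := congrFun hphi 1
    linarith
  have hcx := phi_chi k ![x 0, x 1, x 5]
  rw [chi_eq_of_g_eq_zero hk hg h5.ne', hphi] at hcx
  have hc0 : x 1 + boundKinaseCoeff k * (x 0 * x 1) = c 0 := by
    simpa using (congrFun hcx 0).symm
  have hc1 : x 5 + boundPhosphataseCoeff k * (x 0 * x 1) = c 1 := by
    simpa using (congrFun hcx 1).symm
  have hc2 : x 0 + (boundKinaseCoeff k + boundPhosphataseCoeff k) * (x 0 * x 1) +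
      phosphoformCoeff k * (x 0 * x 1) / x 5 = c 2 := by
    simpa using (congrFun hcx 2).symm
  have h1 : 0 < x 1 := (hx 1).lt_of_ne fun h => (hc 0).ne' (by simp [← hc0, ← h])
  have h0 : 0 < x 0 := (hx 0).lt_of_ne fun h => (hc 2).ne' (by simp [← hc2, ← h])
  have hx1 : c 0 - boundKinaseCoeff k * (x 0 * x 1) = x 1 := by linarith
  have hx5 : c 1 - boundPhosphataseCoeff k * (x 0 * x 1) = x 5 := by linarith
  refine ⟨x 0 * x 1, ⟨by positivity, by linarith, by linarith⟩, ?_, ?_⟩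
  · rwa [totalSubstrate, hx1, hx5, mul_div_cancel_right₀ _ h1.ne']
  · rw [steadyStateCurve, hx1, hx5, mul_div_cancel_right₀ _ h1.ne']
    exact chi_eq_of_g_eq_zero hk hg h5.ne'

end steadyStateCurve

/-- uniqueness of steady states: each compatibility class with
positive total amounts contains exactly one steady state, and it is positive. -/
theorem unique_steady_state (k : Fin 10 → ℝ) (hk : ∀ i, 0 < k i)
    (c : Fin 3 → ℝ) (hc : ∀ i, 0 < c i) :
    (∃! x : Fin 9 → ℝ, (∀ i, 0 ≤ x i) ∧ phi x = c ∧ g k x = 0) ∧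
      (∀ x : Fin 9 → ℝ, ((∀ i, 0 ≤ x i) ∧ phi x = c ∧ g k x = 0) →
        ∀ i, 0 < x i) := by
  obtain ⟨t, ⟨ht, hH⟩, huniq⟩ := existsUnique_totalSubstrate_eq (boundKinaseCoeff_pos hk)
    (boundPhosphataseCoeff_pos hk) (phosphoformCoeff_pos hk) (hc 0) (hc 1) (hc 2)
  refine ⟨⟨steadyStateCurve k c t, isSteadyStateIn_steadyStateCurve hk ht hH, fun x hx => ?_⟩,
    fun x hx => ?_⟩
  · obtain ⟨s, hs, hsH, rfl⟩ := exists_steadyStateCurve_eq hk hc hx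
    rw [huniq s ⟨hs, hsH⟩]
  · obtain ⟨s, hs, -, rfl⟩ := exists_steadyStateCurve_eq hk hc hx
    exact steadyStateCurve_pos hk hs
end
end

section
/- (Parametrization of the compatibility classes.) For every choice of positive rate constants k ∈ ℝ¹⁰, the composite map φ ∘ χ_k : ℝ³_{>0} → ℝ³_{>0} is a bijection, and it is given explicitly by (x₁,x₂,x₆) ↦ ( x₂ + (k₁/(k₂+k₃))(1 + k₃/k₄)·x₁x₂ , x₆ + (k₁k₃/(k₂+k₃))(1/k₇ + 1/k₁₀)·x₁x₂ , x₁ + (k₁k₃/(k₂+k₃))·[ (1/k₃ + 1/k₄ + 1/k₇ + 1/k₁₀) + (1/x₆)·( (k₆+k₇)/(k₅k₇) + (k₉+k₁₀)/(k₁₀k₈) ) ]·x₁x₂ ). -/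
open Matrix Polynomial

noncomputable section

/-!
Write `p = y₀ y₁` for the product of the first two coordinates. The first two coordinates of
`compatMap A B C D y = c` say `y₁ = c₀ - A p` and `y₂ = c₁ - B p`, hence `y₀ = p / (c₀ - A p)`, so
the positive preimages of `c` correspond to the solutions of the remaining scalar equation
`fiberValue p = c₂` with `A p < c₀` and `B p < c₁`. On that interval `fiberValue` is strictly
increasing, vanishes at `p = 0` and is unbounded towards the right end (whichever of the two
denominators vanishes first), so the equation has exactly one solution.
-/

theorem strictMonoOn_div_sub_mul {a : ℝ} (b : ℝ) (ha : 0 < a) :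
    StrictMonoOn (fun p => p / (a - b * p)) {p | b * p < a} := by
  intro p hp q hq hpq
  rw [div_lt_div_iff₀ (sub_pos.2 hp) (sub_pos.2 hq)]
  nlinarith

def compatMap (A B C D : ℝ) (y : Fin 3 → ℝ) : Fin 3 → ℝ :=
  ![y 1 + A * (y 0 * y 1), y 2 + B * (y 0 * y 1), y 0 + (C + D / y 2) * (y 0 * y 1)]

section Fiber

variable {A B C D : ℝ} {c : Fin 3 → ℝ}

def fiberDomain (A B : ℝ) (c : Fin 3 → ℝ) : Set ℝ :=
  {p | A * p < c 0 ∧ B * p < c 1}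

def fiberPoint (A B : ℝ) (c : Fin 3 → ℝ) (p : ℝ) : Fin 3 → ℝ :=
  ![p / (c 0 - A * p), c 0 - A * p, c 1 - B * p]

def fiberValue (A B C D : ℝ) (c : Fin 3 → ℝ) (p : ℝ) : ℝ :=
  p / (c 0 - A * p) + C * p + D * (p / (c 1 - B * p))

theorem compatMap_fiberPoint {p : ℝ} (hp : p ∈ fiberDomain A B c) :
    compatMap A B C D (fiberPoint A B c p) = ![c 0, c 1, fiberValue A B C D c p] := by
  have h₀ : c 0 - A * p ≠ 0 := (sub_pos.2 hp.1).ne'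
  simp only [compatMap, fiberPoint, cons_val, div_mul_cancel₀ p h₀, sub_add_cancel, fiberValue]
  congr 3
  ring

theorem fiberPoint_compatMap {y : Fin 3 → ℝ} (hy : y 1 ≠ 0) :
    fiberPoint A B (compatMap A B C D y) (y 0 * y 1) = y := by
  ext i
  fin_cases i <;> simp [compatMap, fiberPoint, hy]

theorem mul_mem_fiberDomain_compatMap {y : Fin 3 → ℝ} (hy : ∀ i, 0 < y i) :
    y 0 * y 1 ∈ fiberDomain A B (compatMap A B C D y) := by
  simp [fiberDomain, compatMap, hy 1, hy 2]

theorem fiberValue_compatMap {y : Fin 3 → ℝ} (hy : ∀ i, 0 < y i) :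
    fiberValue A B C D (compatMap A B C D y) (y 0 * y 1) = compatMap A B C D y 2 := by
  have h : compatMap A B C D (fiberPoint A B (compatMap A B C D y) (y 0 * y 1)) = _ :=
    compatMap_fiberPoint (mul_mem_fiberDomain_compatMap hy)
  rw [fiberPoint_compatMap (hy 1).ne'] at h
  rw [h]
  rfl

theorem strictMonoOn_fiberValue (hC : 0 ≤ C) (hD : 0 ≤ D) (hc₀ : 0 < c 0) (hc₁ : 0 < c 1) :
    StrictMonoOn (fiberValue A B C D c) (fiberDomain A B c) := by
  have h₀ : StrictMonoOn (fun p => p / (c 0 - A * p)) (fiberDomain A B c) :=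
    (strictMonoOn_div_sub_mul A hc₀).mono fun _ hp => hp.1
  have h₁ : MonotoneOn (fun p => p / (c 1 - B * p)) (fiberDomain A B c) :=
    ((strictMonoOn_div_sub_mul B hc₁).mono fun _ hp => hp.2).monotoneOn
  exact (h₀.add_monotone fun p _ q _ hpq => mul_le_mul_of_nonneg_left hpq hC).add_monotone
    fun p hp q hq hpq => mul_le_mul_of_nonneg_left (h₁ hp hq hpq) hD

theorem continuousOn_fiberValue : ContinuousOn (fiberValue A B C D c) (fiberDomain A B c) := by
  unfold fiberValue
  fun_prop (disch := intro p hp; first | exact (sub_pos.2 hp.1).ne' | exact (sub_pos.2 hp.2).ne')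

theorem exists_div_sub_mul_eq {a b t : ℝ} (ha : 0 < a) (hb : 0 ≤ b) (ht : 0 ≤ t) :
    ∃ p, 0 ≤ p ∧ b * p < a ∧ p / (a - b * p) = t := by
  have h : 0 < 1 + b * t := by positivity
  have hsub : a - b * (a * t / (1 + b * t)) = a / (1 + b * t) := by field_simp; ring
  refine ⟨a * t / (1 + b * t), by positivity, ?_, ?_⟩
  · linarith [div_pos ha h]
  · rw [hsub]; field_simp

theorem exists_fiberValue_eq (hA : 0 ≤ A) (hB : 0 ≤ B) (hC : 0 ≤ C) (hD : 0 < D)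
    (hc : ∀ i, 0 < c i) :
    ∃ p, 0 < p ∧ p ∈ fiberDomain A B c ∧ fiberValue A B C D c p = c 2 := by
  -- `p₀` (resp. `p₁`) makes the first (resp. last) summand of `fiberValue` equal to `c₂`, so at
  -- `min p₀ p₁`, which still lies in the fiber domain, `fiberValue` is at least `c₂`.
  obtain ⟨p₀, hp₀, hAp₀, hval₀⟩ := exists_div_sub_mul_eq (hc 0) hA (hc 2).le
  obtain ⟨p₁, hp₁, hBp₁, hval₁⟩ := exists_div_sub_mul_eq (hc 1) hB (div_pos (hc 2) hD).le
  have hq : 0 ≤ min p₀ p₁ := le_min hp₀ hp₁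
  have hIcc : Set.Icc 0 (min p₀ p₁) ⊆ fiberDomain A B c := fun p hp =>
    ⟨by nlinarith [hp.2.trans (min_le_left p₀ p₁)], by nlinarith [hp.2.trans (min_le_right p₀ p₁)]⟩
  have hc₂_le : c 2 ≤ fiberValue A B C D c (min p₀ p₁) := by
    have hdom := hIcc ⟨hq, le_rfl⟩
    have h₀ := div_nonneg hq (sub_pos.2 hdom.1).le
    have h₁ := mul_nonneg hD.le (div_nonneg hq (sub_pos.2 hdom.2).le)
    have hCq := mul_nonneg hC hq
    unfold fiberValue
    rcases min_cases p₀ p₁ with ⟨hmin, -⟩ | ⟨hmin, -⟩ <;> rw [hmin] at h₀ h₁ hCq ⊢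
    · linarith
    · rw [hval₁, mul_div_cancel₀ _ hD.ne']
      linarith
  obtain ⟨p, hp, hpq⟩ := intermediate_value_Icc hq (continuousOn_fiberValue.mono hIcc)
    ⟨by simpa [fiberValue] using (hc 2).le, hc₂_le⟩
  refine ⟨p, lt_of_le_of_ne hp.1 ?_, hIcc hp, hpq⟩
  rintro rfl
  simp [fiberValue] at hpq
  linarith [hc 2]

end Fiber

theorem compatMap_pos {A B C D : ℝ} (hA : 0 ≤ A) (hB : 0 ≤ B) (hC : 0 ≤ C) (hD : 0 ≤ D)
    {y : Fin 3 → ℝ} (hy : ∀ i, 0 < y i) (i : Fin 3) : 0 < compatMap A B C D y i := by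
  have := hy 0; have := hy 1; have := hy 2
  fin_cases i <;> simp only [compatMap, Fin.zero_eta, Fin.mk_one, Fin.reduceFinMk, cons_val] <;>
    positivity

theorem bijOn_compatMap {A B C D : ℝ} (hA : 0 ≤ A) (hB : 0 ≤ B) (hC : 0 ≤ C) (hD : 0 < D) :
    Set.BijOn (compatMap A B C D) {y | ∀ i, 0 < y i} {c | ∀ i, 0 < c i} := by
  refine ⟨fun y hy => compatMap_pos hA hB hC hD.le hy, fun y hy y' hy' h => ?_, fun c hc => ?_⟩
  · have hc := compatMap_pos hA hB hC hD.le hy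
    have hp : y 0 * y 1 = y' 0 * y' 1 :=
      (strictMonoOn_fiberValue hC hD.le (hc 0) (hc 1)).injOn
        (mul_mem_fiberDomain_compatMap hy) (h ▸ mul_mem_fiberDomain_compatMap hy')
        (by rw [fiberValue_compatMap hy, h, fiberValue_compatMap hy'])
    calc y = fiberPoint A B (compatMap A B C D y) (y 0 * y 1) :=
          (fiberPoint_compatMap (hy 1).ne').symm
      _ = fiberPoint A B (compatMap A B C D y') (y' 0 * y' 1) := by rw [h, hp]
      _ = y' := fiberPoint_compatMap (hy' 1).ne'
  · obtain ⟨p, hp, hdom, hval⟩ := exists_fiberValue_eq hA hB hC hD hc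
    refine ⟨fiberPoint A B c p, fun i => ?_, ?_⟩
    · have h₀ := sub_pos.2 hdom.1
      have h₁ := sub_pos.2 hdom.2
      fin_cases i
      exacts [div_pos hp h₀, h₀, h₁]
    · rw [compatMap_fiberPoint hdom, hval]
      ext i; fin_cases i <;> rfl

theorem phi_chi_eq (k : Fin 10 → ℝ) (hk : ∀ i, 0 < k i) (y : Fin 3 → ℝ) (hy : y 2 ≠ 0) :
    phi (chi k y) =
      ![y 1 + k 0 / (k 1 + k 2) * (1 + k 2 / k 3) * (y 0 * y 1),
        y 2 + k 0 * k 2 / (k 1 + k 2) * (1 / k 6 + 1 / k 9) * (y 0 * y 1),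
        y 0 + k 0 * k 2 / (k 1 + k 2) *
          ((1 / k 2 + 1 / k 3 + 1 / k 6 + 1 / k 9) +
            1 / y 2 * ((k 5 + k 6) / (k 4 * k 6) + (k 8 + k 9) / (k 9 * k 7))) *
          (y 0 * y 1)] := by
  have := hk 0; have := hk 1; have := hk 2; have := hk 3; have := hk 4
  have := hk 6; have := hk 7; have := hk 9
  ext i
  fin_cases i <;> simp only [phi, chi, Fin.zero_eta, Fin.mk_one, Fin.reduceFinMk, cons_val] <;>
    field_simp <;> ring

/-- `φ ∘ χ_k` is a bijection from ℝ³_{>0} to ℝ³_{>0}, with the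
given explicit formula. -/
theorem compat_class_parametrization (k : Fin 10 → ℝ) (hk : ∀ i, 0 < k i) :
    Set.BijOn (fun y => phi (chi k y))
        {y : Fin 3 → ℝ | ∀ i, 0 < y i} {c : Fin 3 → ℝ | ∀ i, 0 < c i} ∧
      ∀ y : Fin 3 → ℝ, (∀ i, 0 < y i) →
        phi (chi k y) =
          ![y 1 + k 0 / (k 1 + k 2) * (1 + k 2 / k 3) * (y 0 * y 1),
            y 2 + k 0 * k 2 / (k 1 + k 2) * (1 / k 6 + 1 / k 9) * (y 0 * y 1),
            y 0 + k 0 * k 2 / (k 1 + k 2) *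
              ((1 / k 2 + 1 / k 3 + 1 / k 6 + 1 / k 9) +
                1 / y 2 * ((k 5 + k 6) / (k 4 * k 6) + (k 8 + k 9) / (k 9 * k 7))) *
              (y 0 * y 1)] := by
  have := hk 0; have := hk 1; have := hk 2; have := hk 3; have := hk 4
  have := hk 5; have := hk 6; have := hk 7; have := hk 8; have := hk 9
  have hformula := fun y (hy : ∀ i, 0 < y i) => phi_chi_eq k hk y (hy 2).ne'
  refine ⟨(bijOn_compatMap (A := k 0 / (k 1 + k 2) * (1 + k 2 / k 3))
      (B := k 0 * k 2 / (k 1 + k 2) * (1 / k 6 + 1 / k 9))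
      (C := k 0 * k 2 / (k 1 + k 2) * (1 / k 2 + 1 / k 3 + 1 / k 6 + 1 / k 9))
      (D := k 0 * k 2 / (k 1 + k 2) * ((k 5 + k 6) / (k 4 * k 6) + (k 8 + k 9) / (k 9 * k 7)))
      (by positivity) (by positivity) (by positivity) (by positivity)).congr fun y hy => ?_,
    hformula⟩
  rw [hformula y hy]
  unfold compatMap
  congr 3
  ring
end
end
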